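/- arXiv:2210.03268 — 5 statements merged into one kernel-verified Lean document; each statement's English description precedes it below -/
import Mathlib

section
/- A conditional probability distribution P is a wiring-type operation if and only if P is a convex combination of deterministic wiring-type operations. Consequently, the set of wiring-type operations for fixed index data equals the convex hull of the finite set of deterministic operations, and each deterministic operation is an extreme point of this set; i.e., the free operations of a given type form a polytope whose vertices are precisely the deterministic operations of that type (a generalization of Fine's theorem). -/
open Finset

/-- A conditional probability distribution `P` (on outputs `∀ i, A i` given settings
`∀ i, X i`) is a *wiring-type operation* if there exist a finite set `Λ` (modelled as a
`Finset ℕ`), a probability distribution `ρ` on `Λ`, and for each wing `i` and each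
`l ∈ Λ` a conditional distribution `Q i x l` on `A i`, such that
`P x a = Σ_{l ∈ Λ} ρ l * Π_i Q i (x i) l (a i)`. -/
def IsWiringOp {I : Type} [Fintype I] [DecidableEq I]
    (X A : I → Type) [∀ i, Fintype (X i)] [∀ i, Fintype (A i)]
    (P : (∀ i, X i) → (∀ i, A i) → ℝ) : Prop :=
  ∃ (Λ : Finset ℕ) (ρ : ℕ → ℝ) (Q : ∀ i, X i → ℕ → A i → ℝ),
    (∀ l ∈ Λ, 0 ≤ ρ l) ∧ (∑ l ∈ Λ, ρ l = 1) ∧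
    (∀ i x l a, 0 ≤ Q i x l a) ∧ (∀ i x, ∀ l ∈ Λ, ∑ a : A i, Q i x l a = 1) ∧
    (∀ x a, P x a = ∑ l ∈ Λ, ρ l * ∏ i, Q i (x i) l (a i))

/-- `P` is a deterministic (wiring-type) operation if there are functions
`f i : X i → A i` with `P x a = Π_i [a i = f i (x i)]`. -/
def IsDetOp {I : Type} [Fintype I] [DecidableEq I]
    (X A : I → Type) [∀ i, Fintype (X i)] [∀ i, Fintype (A i)] [∀ i, DecidableEq (A i)]
    (P : (∀ i, X i) → (∀ i, A i) → ℝ) : Prop :=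
  ∃ f : ∀ i, X i → A i, ∀ x a, P x a = ∏ i, (if a i = f i (x i) then (1 : ℝ) else 0)

/-!
A wiring-type operation is a mixture, over the hidden variable `λ`, of product kernels
`x a ↦ ∏ i, Q i (x i) λ (a i)`. Each product kernel is in turn a mixture of deterministic
ones (Fine's construction): choose every value `f i x'` independently with law `Q i x' λ`;
the law of `a i = f i (x i)` is then `Q i (x i) λ`. Conversely, a mixture of deterministic
operations is a wiring-type operation whose hidden variable is the tuple of response
functions `f`. Finally, a deterministic operation is a vertex of the product over the inputs
of probability simplices, a set that contains every wiring-type operation.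
-/

section StdSimplex

variable {𝕜 β : Type*} [Field 𝕜] [LinearOrder 𝕜] [IsStrictOrderedRing 𝕜] [Fintype β]
  [DecidableEq β]

theorem eq_single_of_mem_stdSimplex_of_apply_eq_one {p : β → 𝕜} (hp : p ∈ stdSimplex 𝕜 β)
    {b : β} (hb : p b = 1) : p = Pi.single b 1 := by
  have hrest : ∑ c ∈ univ.erase b, p c = 0 := by
    have := Finset.add_sum_erase univ p (mem_univ b)
    rw [hp.2, hb] at this
    linarith
  funext c
  by_cases hc : c = b
  · subst hc
    simp [hb]
  · rw [Pi.single_eq_of_ne hc]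
    exact (Finset.sum_eq_zero_iff_of_nonneg fun c _ => hp.1 c).1 hrest c
      (mem_erase.2 ⟨hc, mem_univ c⟩)

theorem single_mem_extremePoints_stdSimplex (b : β) :
    Pi.single b (1 : 𝕜) ∈ (stdSimplex 𝕜 β).extremePoints 𝕜 := by
  refine mem_extremePoints_iff_left.2 ⟨single_mem_stdSimplex 𝕜 b, ?_⟩
  rintro p hp q hq ⟨c, d, hc, hd, hcd, hpq⟩
  refine eq_single_of_mem_stdSimplex_of_apply_eq_one hp ?_
  have hb : c * p b + d * q b = 1 := by simpa using congrFun hpq b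
  have hpb := mem_Icc_of_mem_stdSimplex hp b
  have hqb := mem_Icc_of_mem_stdSimplex hq b
  nlinarith [hpb.2, hqb.2]

end StdSimplex

section SumProd

variable {𝕜 ι : Type*} [CommSemiring 𝕜] [Fintype ι] [DecidableEq ι]

theorem sum_prod_eq_one_of_sum_eq_one {β : ι → Type*} [∀ i, Fintype (β i)]
    {p : ∀ i, β i → 𝕜} (hp : ∀ i, ∑ b, p i b = 1) : ∑ g : ∀ i, β i, ∏ i, p i (g i) = 1 := by
  rw [← Fintype.prod_sum]
  exact Finset.prod_eq_one fun i _ => hp i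

theorem sum_prod_mul_ite_eq {β : Type*} [Fintype β] [DecidableEq β]
    {p : ι → β → 𝕜} (hp : ∀ x, ∑ b, p x b = 1) (x : ι) (b : β) :
    ∑ g : ι → β, (∏ y, p y (g y)) * (if b = g x then 1 else 0) = p x b := by
  let q : ι → β → 𝕜 := fun y c => p y c * if y = x then (if b = c then 1 else 0) else 1
  have hq : ∀ g : ι → β, (∏ y, p y (g y)) * (if b = g x then 1 else 0) = ∏ y, q y (g y) := by
    intro g
    simp only [q, Finset.prod_mul_distrib, Fintype.prod_ite_eq']
  have hq_sum : ∀ y, ∑ c, q y c = if y = x then p x b else 1 := by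
    intro y
    by_cases hy : y = x
    · subst hy
      simp [q]
    · simp [q, hy, hp y]
  simp_rw [hq, ← Fintype.prod_sum, hq_sum]
  simp

end SumProd

section Operations

variable {ι : Type*} [Fintype ι] {α β : ι → Type*} [∀ i, DecidableEq (β i)]

def detOp (f : ∀ i, α i → β i) : (∀ i, α i) → (∀ i, β i) → ℝ :=
  fun x a => ∏ i, if a i = f i (x i) then 1 else 0

def localOp (p : ∀ i, α i → β i → ℝ) : (∀ i, α i) → (∀ i, β i) → ℝ :=
  fun x a => ∏ i, p i (x i) (a i)

theorem detOp_apply (f : ∀ i, α i → β i) (x : ∀ i, α i) :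
    detOp f x = Pi.single (fun i => f i (x i)) 1 := by
  funext a
  simp [detOp, Fintype.prod_boole, Pi.single_apply, funext_iff]

variable [DecidableEq ι] [∀ i, Fintype (β i)]

theorem detOp_mem_extremePoints (f : ∀ i, α i → β i) :
    detOp f ∈ (Set.univ.pi fun _ => stdSimplex ℝ (∀ i, β i)).extremePoints ℝ := by
  rw [extremePoints_pi]
  intro x _
  rw [detOp_apply]
  exact single_mem_extremePoints_stdSimplex _

theorem convexHull_range_detOp_subset :
    convexHull ℝ (Set.range (detOp (α := α) (β := β))) ⊆
      Set.univ.pi fun _ => stdSimplex ℝ (∀ i, β i) :=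
  convexHull_min (Set.range_subset_iff.2 fun f => (detOp_mem_extremePoints f).1)
    (convex_pi fun _ _ => convex_stdSimplex ℝ _)

variable [∀ i, Fintype (α i)] [∀ i, DecidableEq (α i)]

theorem localOp_eq_sum_smul_detOp {p : ∀ i, α i → β i → ℝ} (hp : ∀ i x, ∑ b, p i x b = 1) :
    localOp p = ∑ f : ∀ i, α i → β i, (∏ i, ∏ x, p i x (f i x)) • detOp f := by
  funext x a
  simp only [localOp, detOp, Finset.sum_apply, Pi.smul_apply, smul_eq_mul,
    ← Finset.prod_mul_distrib]
  rw [← Fintype.prod_sum fun i (g : α i → β i) =>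
    (∏ x, p i x (g x)) * if a i = g (x i) then 1 else 0]
  exact Finset.prod_congr rfl fun i _ => (sum_prod_mul_ite_eq (hp i) (x i) (a i)).symm

theorem localOp_mem_convexHull {p : ∀ i, α i → β i → ℝ} (hp₀ : ∀ i x b, 0 ≤ p i x b)
    (hp₁ : ∀ i x, ∑ b, p i x b = 1) : localOp p ∈ convexHull ℝ (Set.range detOp) := by
  rw [localOp_eq_sum_smul_detOp hp₁]
  refine (convex_convexHull ℝ _).sum_mem
    (fun f _ => Finset.prod_nonneg fun i _ => Finset.prod_nonneg fun x _ => hp₀ i x _) ?_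
    (fun f _ => subset_convexHull ℝ _ ⟨f, rfl⟩)
  exact sum_prod_eq_one_of_sum_eq_one fun i => sum_prod_eq_one_of_sum_eq_one (hp₁ i)

end Operations

section Wiring

variable {I : Type} [Fintype I] [DecidableEq I] {X A : I → Type} [∀ i, Fintype (X i)]
  [∀ i, Fintype (A i)]

theorem isWiringOp_of_fintype {Λ : Type*} [Fintype Λ] (ρ : Λ → ℝ) (Q : ∀ i, X i → Λ → A i → ℝ)
    (hρ₀ : ∀ l, 0 ≤ ρ l) (hρ₁ : ∑ l, ρ l = 1) (hQ₀ : ∀ i x l a, 0 ≤ Q i x l a)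
    (hQ₁ : ∀ i x l, ∑ a, Q i x l a = 1) :
    IsWiringOp X A fun x a => ∑ l, ρ l * ∏ i, Q i (x i) l (a i) := by
  have : Nonempty Λ := by
    by_contra h
    rw [not_nonempty_iff] at h
    simp at hρ₁
  let e : Λ ↪ ℕ := (Fintype.equivFin Λ).toEmbedding.trans Fin.valEmbedding
  have hd : ∀ l, Function.invFun e (e l) = l := Function.leftInverse_invFun e.injective
  refine ⟨univ.map e, ρ ∘ Function.invFun e, fun i x n => Q i x (Function.invFun e n),
    fun n _ => hρ₀ _, by simpa [hd], fun i x n => hQ₀ i x _, ?_, fun x a => by simp [hd]⟩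
  intro i x n hn
  obtain ⟨l, -, rfl⟩ := mem_map.1 hn
  simpa [hd] using hQ₁ i x l

theorem IsWiringOp.mem_convexHull [∀ i, DecidableEq (A i)]
    {P : (∀ i, X i) → (∀ i, A i) → ℝ} (hP : IsWiringOp X A P) :
    P ∈ convexHull ℝ (Set.range detOp) := by
  classical
  obtain ⟨Λ, ρ, Q, hρ₀, hρ₁, hQ₀, hQ₁, hP⟩ := hP
  have hP_eq : P = ∑ l ∈ Λ, ρ l • localOp fun i x => Q i x l := by
    funext x a
    simp [hP, localOp, Finset.sum_apply]
  rw [hP_eq]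
  exact (convex_convexHull ℝ _).sum_mem hρ₀ hρ₁ fun l hl =>
    localOp_mem_convexHull (fun i x => hQ₀ i x l) fun i x => hQ₁ i x l hl

theorem isWiringOp_of_mem_convexHull [∀ i, DecidableEq (A i)]
    {P : (∀ i, X i) → (∀ i, A i) → ℝ} (hP : P ∈ convexHull ℝ (Set.range detOp)) :
    IsWiringOp X A P := by
  obtain ⟨Λ, _, w, Q, hw₀, hw₁, hQ, rfl⟩ := mem_convexHull_iff_exists_fintype.1 hP
  choose f hf using hQ
  convert isWiringOp_of_fintype w (fun i x l b => if b = f l i x then 1 else 0) hw₀ hw₁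
    (fun _ _ _ _ => by positivity) (fun _ _ _ => by simp) using 1
  funext x a
  simp [← hf, detOp, Finset.sum_apply]

theorem setOf_isDetOp_eq_range [∀ i, DecidableEq (A i)] :
    {Q | IsDetOp X A Q} = Set.range detOp := by
  ext Q
  constructor
  · rintro ⟨f, hf⟩
    exact ⟨f, funext₂ fun x a => (hf x a).symm⟩
  · rintro ⟨f, rfl⟩
    exact ⟨f, fun _ _ => rfl⟩

theorem setOf_isWiringOp_eq_convexHull [∀ i, DecidableEq (A i)] :
    {P | IsWiringOp X A P} = convexHull ℝ {Q | IsDetOp X A Q} := by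
  rw [setOf_isDetOp_eq_range]
  exact Set.ext fun P => ⟨IsWiringOp.mem_convexHull, isWiringOp_of_mem_convexHull⟩

end Wiring

/-- generalized Fine theorem: `P` is a wiring-type operation iff `P` is a
convex combination of deterministic wiring-type operations; the set of deterministic
operations is finite, so the wiring-type operations of a given type form a polytope
(the convex hull of the finite set of deterministic operations), and every deterministic
operation is an extreme point (vertex) of this polytope. -/
theorem wiringOps_polytope_of_deterministic {I : Type} [Fintype I] [DecidableEq I]
    (X A : I → Type) [∀ i, Fintype (X i)] [∀ i, Fintype (A i)] [∀ i, DecidableEq (A i)] :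
    (∀ P : (∀ i, X i) → (∀ i, A i) → ℝ,
        IsWiringOp X A P ↔ P ∈ convexHull ℝ {Q | IsDetOp X A Q}) ∧
    Set.Finite {Q | IsDetOp X A Q} ∧
    (∀ Q, IsDetOp X A Q → Q ∈ Set.extremePoints ℝ {P | IsWiringOp X A P}) := by
  have hFine := setOf_isWiringOp_eq_convexHull (X := X) (A := A)
  refine ⟨Set.ext_iff.1 hFine, ?_, ?_⟩
  · rw [setOf_isDetOp_eq_range]
    exact Set.finite_range _
  · intro Q hQ
    obtain ⟨f, rfl⟩ := (setOf_isDetOp_eq_range (X := X) (A := A)).subset hQ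
    rw [hFine, setOf_isDetOp_eq_range]
    exact inter_extremePoints_subset_extremePoints_of_subset convexHull_range_detOp_subset
      ⟨subset_convexHull ℝ _ ⟨f, rfl⟩, detOp_mem_extremePoints f⟩
end

section
/- If p is a noncontextual n-cycle behavior, then Ω_γ(p) ≤ n − 2 for every sign vector γ (every γ : ZMod n → {-1,1} with an odd number of entries equal to −1). -/
open Finset

/-- The outcome value `±1` encoded by a `Bool`. -/
def sval (b : Bool) : ℝ := if b then 1 else -1

/-- An `n`-cycle behavior: for each context `{X_i, X_{i+1}}` (`i ∈ ZMod n`) a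
probability distribution `p i` on pairs of `±1` outcomes (encoded as `Bool`s). -/
def IsNCycleBehavior (n : ℕ) (p : ZMod n → Bool → Bool → ℝ) : Prop :=
  (∀ i a b, 0 ≤ p i a b) ∧ ∀ i : ZMod n, ∑ a : Bool, ∑ b : Bool, p i a b = 1

/-- Non-disturbance: for all `i` and `b`, `Σ_a p_i(a,b) = Σ_c p_{i+1}(b,c)`. -/
def NCycleNonDisturbing (n : ℕ) (p : ZMod n → Bool → Bool → ℝ) : Prop :=
  ∀ (i : ZMod n) (b : Bool), ∑ a : Bool, p i a b = ∑ c : Bool, p (i + 1) b c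

/-- Noncontextuality: existence of a global probability distribution `q` on
`ZMod n → Bool` whose marginals reproduce all the `p i`. -/
def NCycleNoncontextual (n : ℕ) [NeZero n] (p : ZMod n → Bool → Bool → ℝ) : Prop :=
  ∃ q : (ZMod n → Bool) → ℝ, (∀ x, 0 ≤ q x) ∧ (∑ x : ZMod n → Bool, q x = 1) ∧
    ∀ (i : ZMod n) (a b : Bool),
      p i a b = ∑ x : ZMod n → Bool, (if x i = a ∧ x (i + 1) = b then q x else 0)

/-- A sign vector: `γ : ZMod n → {-1, 1}` with an odd number of entries equal to `-1`. -/
def IsSignVector (n : ℕ) (γ : ZMod n → ℝ) : Prop :=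
  (∀ i, γ i = 1 ∨ γ i = -1) ∧ ∃ S : Finset (ZMod n), Odd S.card ∧ ∀ i, γ i = -1 ↔ i ∈ S

/-- The noncontextuality functional `Ω_γ(p) = Σ_i γ(i) ⟨X_i X_{i+1}⟩_p`, where
`⟨X_i X_{i+1}⟩_p = Σ_{a,b} a·b·p_i(a,b)`. -/
noncomputable def OmegaNC (n : ℕ) [NeZero n] (γ : ZMod n → ℝ)
    (p : ZMod n → Bool → Bool → ℝ) : ℝ :=
  ∑ i : ZMod n, γ i * ∑ a : Bool, ∑ b : Bool, sval a * sval b * p i a b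

/-- A type-preserving noncontextual wiring on the `n`-cycle scenario: a finite set `Λ`
(of natural numbers) with a probability distribution `ρ`; a finite set `R` with
pre-processing distributions `q j (·|λ)` on `R`; a context-selection map `g`; and
post-processing distributions `m j (·|r, s, λ)` on `{-1,1}` (encoded as `Bool`). -/
structure NCWiring (n : ℕ) where
  Λ : Finset ℕ
  ρ : ℕ → ℝ
  ρ_nonneg : ∀ l ∈ Λ, 0 ≤ ρ l
  ρ_sum : ∑ l ∈ Λ, ρ l = 1
  R : Finset ℕ
  q : ZMod n → ℕ → ℕ → ℝ
  q_nonneg : ∀ j l r, 0 ≤ q j l r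
  q_sum : ∀ j : ZMod n, ∀ l ∈ Λ, ∑ r ∈ R, q j l r = 1
  g : ZMod n → ℕ → ℕ → ZMod n
  m : ZMod n → ℕ → Bool → ℕ → Bool → ℝ
  m_nonneg : ∀ j r s l t, 0 ≤ m j r s l t
  m_sum : ∀ j r s l, ∑ t : Bool, m j r s l t = 1

/-- The action of a noncontextual wiring on a behavior:
`(W(B))_i(t,t') = Σ_λ ρ(λ) Σ_{r,r'} q_i(r|λ) q_{i+1}(r'|λ)
  Σ_{s,s'} p_{g(i,r,r')}(s,s') m_i(t|r,s,λ) m_{i+1}(t'|r',s',λ)`. -/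
def NCWiring.apply {n : ℕ} (W : NCWiring n) (p : ZMod n → Bool → Bool → ℝ) :
    ZMod n → Bool → Bool → ℝ :=
  fun i t t' => ∑ l ∈ W.Λ, W.ρ l * ∑ r ∈ W.R, ∑ r' ∈ W.R,
    W.q i l r * W.q (i + 1) l r' * ∑ s : Bool, ∑ s' : Bool,
      p (W.g i r r') s s' * W.m i r s l t * W.m (i + 1) r' s' l t'

/-- A wiring is deterministic when every pre-processing distribution `q j (·|λ)` and
every post-processing distribution `m j (·|r,s,λ)` is a point mass. -/
def NCWiring.IsDeterministic {n : ℕ} (W : NCWiring n) : Prop :=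
  (∀ j : ZMod n, ∀ l ∈ W.Λ, ∃ r₀ ∈ W.R, ∀ r ∈ W.R, W.q j l r = if r = r₀ then 1 else 0) ∧
  (∀ (j : ZMod n) (r : ℕ) (s : Bool) (l : ℕ),
    ∃ t₀ : Bool, ∀ t : Bool, W.m j r s l t = if t = t₀ then 1 else 0)

/-- `B → B'`: some type-preserving noncontextual wiring maps `B` to `B'`. -/
def NCConvertsTo (n : ℕ) (B B' : ZMod n → Bool → Bool → ℝ) : Prop :=
  ∃ W : NCWiring n, W.apply B = B'

/-- The PR-like behavior for a sign vector `γ`: `(B_PR)_i(a,b) = (1 + γ(i)·a·b)/4`. -/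
noncomputable def BPR (n : ℕ) (γ : ZMod n → ℝ) : ZMod n → Bool → Bool → ℝ :=
  fun i a b => (1 + γ i * sval a * sval b) / 4

/-- The noisy-PR behavior `B_NPR = ((n-2)/n)·B_PR + (2/n)·B_∅`, where
`B_∅` is the maximally mixed behavior with all probabilities `1/4`. -/
noncomputable def BNPR (n : ℕ) (γ : ZMod n → ℝ) : ZMod n → Bool → Bool → ℝ :=
  fun i a b => (((n : ℝ) - 2) / (n : ℝ)) * BPR n γ i a b + (2 / (n : ℝ)) * (1 / 4)

/-- The interpolating family `F(α) = α·B_PR + (1-α)·B_NPR`. -/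
noncomputable def Fmix (n : ℕ) (γ : ZMod n → ℝ) (α : ℝ) : ZMod n → Bool → Bool → ℝ :=
  fun i a b => α * BPR n γ i a b + (1 - α) * BNPR n γ i a b

lemma sval_sq (b : Bool) : sval b * sval b = 1 := by cases b <;> simp [sval]

lemma bool_sum_ite (c d : Bool) (v : ℝ) :
    ∑ a : Bool, ∑ b : Bool, sval a * sval b * (if c = a ∧ d = b then v else 0)
      = sval c * sval d * v := by
  cases c <;> cases d <;> simp [sval] <;> ring

lemma cycle_sum_le (n : ℕ) [NeZero n] (hn : 3 ≤ n) (γ : ZMod n → ℝ)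
    (hγ : IsSignVector n γ) (x : ZMod n → Bool) :
    ∑ i : ZMod n, γ i * (sval (x i) * sval (x (i + 1))) ≤ (n : ℝ) - 2 := by
  set f : ZMod n → ℝ := fun i => γ i * (sval (x i) * sval (x (i + 1))) with hf
  have hf1 : ∀ i, f i = 1 ∨ f i = -1 := by
    intro i
    rcases hγ.1 i with h | h <;> cases hx : x i <;> cases hy : x (i + 1) <;>
      simp [hf, h, hx, hy, sval]
  have hγprod : ∏ i : ZMod n, γ i = -1 := by
    obtain ⟨S, hodd, hS⟩ := hγ.2
    rw [← Finset.prod_mul_prod_compl S γ]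
    have h1 : ∏ i ∈ S, γ i = (-1 : ℝ) ^ S.card := by
      rw [Finset.prod_congr rfl (fun i hi => (hS i).2 hi), Finset.prod_const]
    have h2 : ∏ i ∈ Sᶜ, γ i = 1 := by
      apply Finset.prod_eq_one
      intro i hi
      rcases hγ.1 i with h | h
      · exact h
      · exact absurd ((hS i).1 h) (by simpa using hi)
    rw [h1, h2, hodd.neg_one_pow, mul_one]
  have hshift : ∏ i : ZMod n, sval (x (i + 1)) = ∏ i : ZMod n, sval (x i) :=
    Fintype.prod_equiv (Equiv.addRight (1 : ZMod n)) _ _ (fun i => rfl)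
  have hprod : ∏ i : ZMod n, f i = -1 := by
    have : ∏ i : ZMod n, f i =
        (∏ i : ZMod n, γ i) * ((∏ i : ZMod n, sval (x i)) *
          (∏ i : ZMod n, sval (x (i + 1)))) := by
      simp [hf, Finset.prod_mul_distrib]
    rw [this, hshift, hγprod]
    have hsq : (∏ i : ZMod n, sval (x i)) * (∏ i : ZMod n, sval (x i)) = 1 := by
      rw [← Finset.prod_mul_distrib]
      exact Finset.prod_eq_one fun i _ => sval_sq (x i)
    rw [hsq]; ring
  have hex : ∃ i, f i = -1 := by
    by_contra h
    push_neg at h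
    have hall : ∀ i, f i = 1 := fun i => (hf1 i).resolve_right (h i)
    rw [Finset.prod_congr rfl (fun i _ => hall i), Finset.prod_const_one] at hprod
    norm_num at hprod
  obtain ⟨i, hi⟩ := hex
  have hsum : ∑ j : ZMod n, f j = f i + ∑ j ∈ Finset.univ.erase i, f j :=
    (Finset.add_sum_erase _ _ (Finset.mem_univ i)).symm
  have hcard : (Finset.univ.erase i).card = n - 1 := by
    simp [Finset.card_erase_of_mem, ZMod.card]
  have hle : ∑ j ∈ Finset.univ.erase i, f j ≤ (n : ℝ) - 1 := by
    calc ∑ j ∈ Finset.univ.erase i, f j ≤ ∑ _j ∈ Finset.univ.erase i, (1 : ℝ) :=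
          Finset.sum_le_sum fun j _ => by rcases hf1 j with h | h <;> rw [h] <;> norm_num
      _ = ((n - 1 : ℕ) : ℝ) := by rw [Finset.sum_const, hcard]; simp
      _ = (n : ℝ) - 1 := by
          rw [Nat.cast_sub (by omega)]; norm_num
  rw [hsum]; linarith

/-- if `p` is a noncontextual `n`-cycle behavior, then `Ω_γ(p) ≤ n - 2`
for every sign vector `γ`. -/
theorem noncontextual_omega_le (n : ℕ) [NeZero n] (hn : 3 ≤ n)
    (p : ZMod n → Bool → Bool → ℝ)
    (hp : IsNCycleBehavior n p) (hnc : NCycleNoncontextual n p)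
    (γ : ZMod n → ℝ) (hγ : IsSignVector n γ) :
    OmegaNC n γ p ≤ (n : ℝ) - 2 := by
  obtain ⟨q, hq0, hq1, hqm⟩ := hnc
  have step : ∀ i : ZMod n, ∑ a : Bool, ∑ b : Bool, sval a * sval b * p i a b
      = ∑ x : ZMod n → Bool, sval (x i) * sval (x (i + 1)) * q x := by
    intro i
    calc ∑ a : Bool, ∑ b : Bool, sval a * sval b * p i a b
        = ∑ a : Bool, ∑ b : Bool, ∑ x : ZMod n → Bool,
            sval a * sval b * (if x i = a ∧ x (i + 1) = b then q x else 0) := by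
          simp_rw [hqm i, Finset.mul_sum]
      _ = ∑ x : ZMod n → Bool, ∑ a : Bool, ∑ b : Bool,
            sval a * sval b * (if x i = a ∧ x (i + 1) = b then q x else 0) := by
          have h1 : ∀ a : Bool,
              (∑ b : Bool, ∑ x : ZMod n → Bool,
                sval a * sval b * (if x i = a ∧ x (i + 1) = b then q x else 0))
              = ∑ x : ZMod n → Bool, ∑ b : Bool,
                sval a * sval b * (if x i = a ∧ x (i + 1) = b then q x else 0) :=
            fun a => Finset.sum_comm
          simp_rw [h1]
          exact Finset.sum_comm
      _ = ∑ x : ZMod n → Bool, sval (x i) * sval (x (i + 1)) * q x := by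
          exact Finset.sum_congr rfl fun x _ => bool_sum_ite (x i) (x (i + 1)) (q x)
  have key : OmegaNC n γ p =
      ∑ x : ZMod n → Bool, q x * ∑ i : ZMod n, γ i * (sval (x i) * sval (x (i + 1))) := by
    unfold OmegaNC
    simp_rw [step, Finset.mul_sum]
    rw [Finset.sum_comm]
    exact Finset.sum_congr rfl fun x _ => Finset.sum_congr rfl fun i _ => by ring
  rw [key]
  calc ∑ x : ZMod n → Bool, q x * ∑ i : ZMod n, γ i * (sval (x i) * sval (x (i + 1)))
      ≤ ∑ x : ZMod n → Bool, q x * ((n : ℝ) - 2) :=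
        Finset.sum_le_sum fun x _ =>
          mul_le_mul_of_nonneg_left (cycle_sum_le n hn γ hγ x) (hq0 x)
    _ = (n : ℝ) - 2 := by rw [← Finset.sum_mul, hq1, one_mul]
end

section
/- If p is a non-disturbing n-cycle behavior and γ, γ′ are two distinct sign vectors, then Ω_γ(p) > n − 2 and Ω_{γ′}(p) > n − 2 cannot both hold. In other words, the regions of strict violation of the noncontextuality inequalities Ω_γ ≤ n − 2 are pairwise non-intersecting: a non-disturbing behavior strictly violates at most one such inequality. -/
open Finset

/-- a non-disturbing `n`-cycle behavior strictly violates at most one of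
the noncontextuality inequalities `Ω_γ ≤ n - 2`: for distinct sign vectors `γ ≠ γ'`,
`Ω_γ(p) > n - 2` and `Ω_{γ'}(p) > n - 2` cannot both hold. -/
theorem violation_regions_disjoint (n : ℕ) [NeZero n] (hn : 3 ≤ n)
    (p : ZMod n → Bool → Bool → ℝ)
    (hp : IsNCycleBehavior n p) (hnd : NCycleNonDisturbing n p)
    (γ γ' : ZMod n → ℝ) (hγ : IsSignVector n γ) (hγ' : IsSignVector n γ')
    (hne : γ ≠ γ') :
    ¬ ((n : ℝ) - 2 < OmegaNC n γ p ∧ (n : ℝ) - 2 < OmegaNC n γ' p) := by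
  rintro ⟨h1, h2⟩
  obtain ⟨hγ1, S, hSodd, hS⟩ := hγ
  obtain ⟨hγ'1, S', hS'odd, hS'⟩ := hγ'
  set E : ZMod n → ℝ := fun i => ∑ a : Bool, ∑ b : Bool, sval a * sval b * p i a b with hE
  have hEbd : ∀ i, -1 ≤ E i ∧ E i ≤ 1 := by
    intro i
    have h0 := hp.1
    have hs := hp.2 i
    simp only [Fintype.sum_bool] at hs
    have e1 := h0 i true true
    have e2 := h0 i true false
    have e3 := h0 i false true
    have e4 := h0 i false false
    constructor <;>
    · simp only [hE, Fintype.sum_bool, sval]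
      norm_num
      linarith
  set D : Finset (ZMod n) := symmDiff S S' with hD
  have hmemD : ∀ i, γ i ≠ γ' i ↔ i ∈ D := by
    intro i
    have hiS : i ∈ S ↔ γ i = -1 := (hS i).symm
    have hiS' : i ∈ S' ↔ γ' i = -1 := (hS' i).symm
    rw [hD, Finset.mem_symmDiff, hiS, hiS']
    rcases hγ1 i with h | h <;> rcases hγ'1 i with h' | h' <;>
      rw [h, h'] <;> norm_num
  have hcard1 : D.card + 2 * (S ∩ S').card = S.card + S'.card := by
    have a1 := Finset.card_sdiff_add_card_inter S S'
    have a2 := Finset.card_sdiff_add_card_inter S' S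
    have a3 : D.card = (S \ S').card + (S' \ S).card := by
      rw [hD, symmDiff_def, Finset.sup_eq_union, Finset.card_union_of_disjoint]
      exact disjoint_sdiff_sdiff
    rw [Finset.inter_comm S' S] at a2
    omega
  have hDeven : Even D.card := by
    obtain ⟨k, hk⟩ := hSodd
    obtain ⟨k', hk'⟩ := hS'odd
    refine ⟨D.card / 2, ?_⟩
    omega
  have hDne : D.Nonempty := by
    by_contra hcon
    apply hne
    funext i
    by_contra hgi
    exact hcon ⟨i, (hmemD i).mp hgi⟩
  have hD2 : 2 ≤ D.card := by
    rcases hDeven with ⟨k, hk⟩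
    have := Finset.card_pos.mpr hDne
    omega
  have hDle : D.card ≤ n := by
    have := Finset.card_le_univ D
    simpa [ZMod.card n] using this
  have hsum : OmegaNC n γ p + OmegaNC n γ' p = ∑ i : ZMod n, (γ i + γ' i) * E i := by
    unfold OmegaNC
    rw [← Finset.sum_add_distrib]
    exact Finset.sum_congr rfl fun i _ => by ring
  have hterm : ∀ i : ZMod n, (γ i + γ' i) * E i ≤ if i ∈ D then 0 else 2 := by
    intro i
    have hb := hEbd i
    by_cases hi : i ∈ D
    · have hne' : γ i ≠ γ' i := (hmemD i).mpr hi
      have hz : γ i + γ' i = 0 := by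
        rcases hγ1 i with h | h <;> rcases hγ'1 i with h' | h' <;>
          rw [h, h'] at hne' ⊢ <;> norm_num <;> simp at hne'
      rw [hz, zero_mul]
      simp [hi]
    · have hgg : γ i = γ' i := by
        by_contra hcon; exact hi ((hmemD i).mp hcon)
      simp only [hi, if_false]
      rcases hγ1 i with h | h <;> rw [← hgg, h] <;> linarith [hb.1, hb.2]
  have hcount : ∑ i : ZMod n, (if i ∈ D then (0:ℝ) else 2) = 2 * ((n : ℝ) - D.card) := by
    have h2' : ∀ i : ZMod n, (if i ∈ D then (0:ℝ) else 2)
        = (2:ℝ) - (if i ∈ D then 2 else 0) := by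
      intro i; by_cases hi : i ∈ D <;> simp [hi]
    rw [Finset.sum_congr rfl fun i _ => h2' i, Finset.sum_sub_distrib,
      Finset.sum_const, Finset.sum_ite_mem, Finset.univ_inter, Finset.sum_const,
      Finset.card_univ, ZMod.card n, nsmul_eq_mul, nsmul_eq_mul]
    ring
  have hsumle : ∑ i : ZMod n, (γ i + γ' i) * E i ≤ 2 * ((n : ℝ) - D.card) := by
    rw [← hcount]
    exact Finset.sum_le_sum fun i _ => hterm i
  have hkey : OmegaNC n γ p + OmegaNC n γ' p ≤ 2 * ((n : ℝ) - D.card) := hsum ▸ hsumle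
  have hDcast : (2:ℝ) ≤ (D.card : ℝ) := by exact_mod_cast hD2
  linarith
end

section
/- Let B be a contextual non-disturbing n-cycle behavior and let γ be the unique sign vector with Ω_γ(B) > n − 2. Then there exist λ ∈ (0,1] and a noncontextual behavior B_f with Ω_γ(B_f) = n − 2 such that B = λ·B_PR + (1−λ)·B_f, where B_PR is the PR-like behavior for γ; necessarily λ = (Ω_γ(B) − (n−2))/2. -/
open Finset

namespace CycleDecomp

open Finset

lemma sval_sq (a : Bool) : sval a * sval a = 1 := by cases a <;> norm_num [sval]

/-- Partial products of `γ` along the cycle starting at `d`. -/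
noncomputable def prodS (n : ℕ) (γ : ZMod n → ℝ) (d : ZMod n) (k : ℕ) : ℝ :=
  ∏ j ∈ Finset.range k, γ (d + (j : ZMod n))

lemma prodS_succ {n : ℕ} (γ : ZMod n → ℝ) (d : ZMod n) (k : ℕ) :
    prodS n γ d (k + 1) = prodS n γ d k * γ (d + (k : ZMod n)) :=
  Finset.prod_range_succ _ _

lemma prodS_pm {n : ℕ} (γ : ZMod n → ℝ) (h1 : ∀ i, γ i = 1 ∨ γ i = -1) (d : ZMod n) :
    ∀ k, prodS n γ d k = 1 ∨ prodS n γ d k = -1 := by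
  intro k
  induction k with
  | zero => left; simp [prodS]
  | succ k ih =>
    rw [prodS_succ]
    rcases ih with h | h <;> rcases h1 (d + (k : ZMod n)) with h2 | h2 <;>
      rw [h, h2] <;> norm_num

lemma cast_n_sub_one {n : ℕ} [NeZero n] (hn1 : 1 ≤ n) : (((n - 1 : ℕ)) : ZMod n) = -1 := by
  have h := ZMod.natCast_self n
  rw [Nat.cast_sub hn1, h]
  ring

lemma prodS_total {n : ℕ} [NeZero n] (γ : ZMod n → ℝ) (h1 : ∀ i, γ i = 1 ∨ γ i = -1)
    (S : Finset (ZMod n)) (hodd : Odd S.card) (hS : ∀ i, γ i = -1 ↔ i ∈ S) (d : ZMod n) :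
    prodS n γ d n = -1 := by
  have step1 : prodS n γ d n = ∏ z : ZMod n, γ (d + z) := by
    refine Finset.prod_nbij' (fun j => ((j : ℕ) : ZMod n)) (fun z => z.val)
      (fun a _ => Finset.mem_univ _) (fun z _ => Finset.mem_range.2 z.val_lt)
      ?_ ?_ ?_
    · intro a ha
      exact ZMod.val_cast_of_lt (Finset.mem_range.1 ha)
    · intro z _
      exact ZMod.natCast_zmod_val z
    · intro a _
      rfl
  have step2 : ∏ z : ZMod n, γ (d + z) = ∏ z : ZMod n, γ z :=
    Fintype.prod_equiv (Equiv.addLeft d) _ _ (fun z => rfl)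
  have step3 : ∏ z : ZMod n, γ z = -1 := by
    rw [← Finset.prod_mul_prod_compl S γ]
    have hA : ∏ i ∈ S, γ i = (-1 : ℝ) ^ S.card := by
      rw [← Finset.prod_const]
      exact Finset.prod_congr rfl fun i hi => (hS i).2 hi
    have hB : ∏ i ∈ Sᶜ, γ i = 1 := by
      refine Finset.prod_eq_one fun i hi => ?_
      rcases h1 i with h | h
      · exact h
      · exact absurd ((hS i).1 h) (Finset.mem_compl.1 hi)
    rw [hA, hB, hodd.neg_one_pow, mul_one]
  rw [step1, step2, step3]

/-- The global assignment with a single `γ`-defect at edge `d` and value `a` at site `d`. -/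
noncomputable def Xasgn (n : ℕ) [NeZero n] (γ : ZMod n → ℝ) (d : ZMod n) (a : Bool) :
    ZMod n → Bool :=
  fun j => if j = d then a else if prodS n γ d ((j - d).val) = 1 then !a else a

lemma Xasgn_self {n : ℕ} [NeZero n] (γ : ZMod n → ℝ) (d : ZMod n) (a : Bool) :
    Xasgn n γ d a d = a := by simp [Xasgn]

lemma sval_Xasgn_ne {n : ℕ} [NeZero n] (γ : ZMod n → ℝ) (h1 : ∀ i, γ i = 1 ∨ γ i = -1)
    (d : ZMod n) (a : Bool) (j : ZMod n) (hj : j ≠ d) :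
    sval (Xasgn n γ d a j) = -(sval a) * prodS n γ d ((j - d).val) := by
  unfold Xasgn
  rw [if_neg hj]
  rcases prodS_pm γ h1 d ((j - d).val) with h | h <;> rw [h] <;> cases a <;>
    norm_num [sval]

lemma sval_Xasgn_step {n : ℕ} [NeZero n] (hn : 3 ≤ n) (γ : ZMod n → ℝ)
    (h1 : ∀ i, γ i = 1 ∨ γ i = -1) (hprod : ∀ d, prodS n γ d n = -1)
    (d : ZMod n) (a : Bool) (j : ZMod n) :
    sval (Xasgn n γ d a (j + 1)) = (if j = d then -1 else 1) * (γ j * sval (Xasgn n γ d a j)) := by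
  have hn1 : 1 < n := by omega
  have hone : ((1 : ZMod n)).val = 1 := by
    rw [ZMod.val_one_eq_one_mod]; exact Nat.mod_eq_of_lt hn1
  have hone0 : (1 : ZMod n) ≠ 0 := by
    intro h
    have h2 : ((1 : ℕ) : ZMod n) = 0 := by exact_mod_cast h
    have h3 := (ZMod.natCast_eq_zero_iff 1 n).mp h2
    have := Nat.le_of_dvd one_pos h3
    omega
  by_cases hjd : j = d
  · subst hjd
    rw [if_pos rfl, Xasgn_self]
    have hne : j + 1 ≠ j := by
      intro h
      exact hone0 (by linear_combination h - (congrArg id rfl : (j:ZMod n) = j))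
    have hne' : j + 1 ≠ j := by
      intro h
      apply hone0
      have : j + 1 = j + 0 := by rw [add_zero]; exact h
      exact add_left_cancel this
    rw [sval_Xasgn_ne γ h1 j a (j + 1) hne']
    have e : j + 1 - j = (1 : ZMod n) := by ring
    rw [e, hone]
    have e2 : prodS n γ j 1 = γ j := by simp [prodS]
    rw [e2]; ring
  · by_cases hj1 : j + 1 = d
    · have hval : (j - d).val = n - 1 := by
        have e : j - d = -1 := by rw [← hj1]; ring
        rw [e, ← cast_n_sub_one (n := n) (by omega)]
        exact ZMod.val_cast_of_lt (by omega)
      have hdj : d + (((n - 1 : ℕ)) : ZMod n) = j := by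
        rw [cast_n_sub_one (n := n) (by omega), ← hj1]; ring
      have e0 : prodS n γ d n = prodS n γ d ((n - 1) + 1) := by
        rw [show (n - 1) + 1 = n by omega]
      have hsucc : prodS n γ d n = prodS n γ d (n - 1) * γ j := by
        rw [e0, prodS_succ, hdj]
      have hkey : γ j * prodS n γ d (n - 1) = -1 := by
        linear_combination hprod d - hsucc
      rw [hj1, Xasgn_self, if_neg hjd, sval_Xasgn_ne γ h1 d a j hjd, hval]
      have : (1 : ℝ) * (γ j * (-(sval a) * prodS n γ d (n - 1)))
          = -(sval a) * (γ j * prodS n γ d (n - 1)) := by ring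
      rw [this, hkey]; ring
    · have hvlt : (j - d).val < n := ZMod.val_lt _
      have hne1 : (j - d).val ≠ n - 1 := by
        intro h
        apply hj1
        have e : j - d = (((n - 1 : ℕ)) : ZMod n) := by
          rw [← h, ZMod.natCast_zmod_val]
        rw [cast_n_sub_one (n := n) (by omega)] at e
        have : j = d - 1 := by linear_combination e
        rw [this]; ring
      have h2 : (j + 1 - d).val = (j - d).val + 1 := by
        have e : j + 1 - d = (j - d) + 1 := by ring
        rw [e, ZMod.val_add, hone, Nat.mod_eq_of_lt (by omega)]
      rw [sval_Xasgn_ne γ h1 d a (j + 1) hj1, sval_Xasgn_ne γ h1 d a j hjd, h2, prodS_succ]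
      have e3 : d + ((((j - d).val : ℕ)) : ZMod n) = j := by
        rw [ZMod.natCast_zmod_val]; ring
      rw [e3, if_neg hjd]; ring

section Machinery

variable {n : ℕ} [NeZero n] (γ : ZMod n → ℝ)

/-- The global distribution built from weights `w d a` on single-defect assignments. -/
noncomputable def qw (n : ℕ) [NeZero n] (γ : ZMod n → ℝ) (w : ZMod n → Bool → ℝ) :
    (ZMod n → Bool) → ℝ :=
  fun x => ∑ d : ZMod n, ∑ a : Bool, if x = Xasgn n γ d a then w d a else 0

/-- The behavior induced by `qw`. -/
noncomputable def BfW (n : ℕ) [NeZero n] (γ : ZMod n → ℝ) (w : ZMod n → Bool → ℝ) :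
    ZMod n → Bool → Bool → ℝ :=
  fun i a b => ∑ x : ZMod n → Bool, if x i = a ∧ x (i + 1) = b then qw n γ w x else 0

lemma qw_nonneg (w : ZMod n → Bool → ℝ) (hw : ∀ d a, 0 ≤ w d a) (x : ZMod n → Bool) :
    0 ≤ qw n γ w x := by
  refine Finset.sum_nonneg fun d _ => Finset.sum_nonneg fun a _ => ?_
  split
  · exact hw d a
  · exact le_rfl

lemma qw_total (w : ZMod n → Bool → ℝ) :
    ∑ x : ZMod n → Bool, qw n γ w x = ∑ d : ZMod n, ∑ a : Bool, w d a := by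
  unfold qw
  rw [Finset.sum_comm]
  refine Finset.sum_congr rfl fun d _ => ?_
  rw [Finset.sum_comm]
  refine Finset.sum_congr rfl fun a _ => ?_
  simp

lemma BfW_nonneg (w : ZMod n → Bool → ℝ) (hw : ∀ d a, 0 ≤ w d a) (i : ZMod n) (a b : Bool) :
    0 ≤ BfW n γ w i a b := by
  refine Finset.sum_nonneg fun x _ => ?_
  split
  · exact qw_nonneg γ w hw x
  · exact le_rfl

lemma BfW_exp (w : ZMod n → Bool → ℝ) (F : Bool → Bool → ℝ) (i : ZMod n) :
    ∑ a : Bool, ∑ b : Bool, F a b * BfW n γ w i a b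
      = ∑ d : ZMod n, ∑ a' : Bool,
          w d a' * F (Xasgn n γ d a' i) (Xasgn n γ d a' (i + 1)) := by
  have step1 : ∑ a : Bool, ∑ b : Bool, F a b * BfW n γ w i a b
      = ∑ x : ZMod n → Bool, qw n γ w x * F (x i) (x (i + 1)) := by
    unfold BfW
    simp_rw [Finset.mul_sum]
    refine (Finset.sum_congr rfl fun a _ => Finset.sum_comm).trans ?_
    rw [Finset.sum_comm]
    refine Finset.sum_congr rfl fun x _ => ?_
    cases hxi : x i <;> cases hxj : x (i + 1) <;>
      simp [Fintype.sum_bool, hxi, hxj, mul_comm]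
  rw [step1]
  unfold qw
  simp_rw [Finset.sum_mul]
  rw [Finset.sum_comm]
  refine Finset.sum_congr rfl fun d _ => ?_
  rw [Finset.sum_comm]
  refine Finset.sum_congr rfl fun a' _ => ?_
  rw [Finset.sum_eq_single (Xasgn n γ d a')]
  · simp
  · intro x _ hx
    rw [if_neg hx, zero_mul]
  · intro h
    exact absurd (Finset.mem_univ _) h

lemma BfW_sum (w : ZMod n → Bool → ℝ) (i : ZMod n) :
    ∑ a : Bool, ∑ b : Bool, BfW n γ w i a b = ∑ d : ZMod n, ∑ a' : Bool, w d a' := by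
  have h := BfW_exp γ w (fun _ _ => 1) i
  simpa using h

lemma BfW_marg1 (w : ZMod n → Bool → ℝ) (i : ZMod n) :
    ∑ a : Bool, ∑ b : Bool, sval a * BfW n γ w i a b
      = ∑ d : ZMod n, ∑ a' : Bool, w d a' * sval (Xasgn n γ d a' i) :=
  BfW_exp γ w (fun a _ => sval a) i

lemma BfW_marg2 (w : ZMod n → Bool → ℝ) (i : ZMod n) :
    ∑ a : Bool, ∑ b : Bool, sval b * BfW n γ w i a b
      = ∑ d : ZMod n, ∑ a' : Bool, w d a' * sval (Xasgn n γ d a' (i + 1)) :=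
  BfW_exp γ w (fun _ b => sval b) i

lemma BfW_corr (hn : 3 ≤ n) (h1 : ∀ i, γ i = 1 ∨ γ i = -1)
    (hprod : ∀ d, prodS n γ d n = -1) (w : ZMod n → Bool → ℝ) (i : ZMod n) :
    ∑ a : Bool, ∑ b : Bool, sval a * sval b * BfW n γ w i a b
      = γ i * ((∑ d : ZMod n, ∑ a' : Bool, w d a') - 2 * ∑ a' : Bool, w i a') := by
  rw [BfW_exp γ w (fun a b => sval a * sval b) i]
  have hpt : ∀ (d : ZMod n) (a' : Bool),
      w d a' * (sval (Xasgn n γ d a' i) * sval (Xasgn n γ d a' (i + 1)))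
        = γ i * w d a' - 2 * γ i * (if d = i then w d a' else 0) := by
    intro d a'
    rw [sval_Xasgn_step hn γ h1 hprod d a' i]
    by_cases h : i = d
    · rw [if_pos h, if_pos h.symm]
      have hs := sval_sq (Xasgn n γ d a' i)
      linear_combination (-(w d a' * γ i)) * hs
    · rw [if_neg h, if_neg (Ne.symm h)]
      have hs := sval_sq (Xasgn n γ d a' i)
      linear_combination (w d a' * γ i) * hs
  simp_rw [hpt]
  simp_rw [Finset.sum_sub_distrib]
  have e1 : ∑ d : ZMod n, ∑ a' : Bool, γ i * w d a'
      = γ i * ∑ d : ZMod n, ∑ a' : Bool, w d a' := by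
    rw [Finset.mul_sum]
    refine Finset.sum_congr rfl fun d _ => ?_
    rw [Finset.mul_sum]
  have e2 : ∑ d : ZMod n, ∑ a' : Bool, (2 * γ i * (if d = i then w d a' else 0))
      = 2 * γ i * ∑ a' : Bool, w i a' := by
    have h3 : ∀ d : ZMod n, ∑ a' : Bool, (2 * γ i * (if d = i then w d a' else 0))
        = if d = i then 2 * γ i * ∑ a' : Bool, w d a' else 0 := by
      intro d
      split
      · rw [Finset.mul_sum]
      · simp
    simp_rw [h3]
    rw [Finset.sum_ite_eq' Finset.univ i (fun d => 2 * γ i * ∑ a' : Bool, w d a'),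
      if_pos (Finset.mem_univ i)]
  rw [e1, e2]
  ring

lemma BfW_Mrec (hn : 3 ≤ n) (h1 : ∀ i, γ i = 1 ∨ γ i = -1)
    (hprod : ∀ d, prodS n γ d n = -1) (w : ZMod n → Bool → ℝ) (j : ZMod n) :
    ∑ d : ZMod n, ∑ a' : Bool, w d a' * sval (Xasgn n γ d a' (j + 1))
      = γ j * ((∑ d : ZMod n, ∑ a' : Bool, w d a' * sval (Xasgn n γ d a' j))
          - 2 * (w j true - w j false)) := by
  have hpt : ∀ (d : ZMod n) (a' : Bool),
      w d a' * sval (Xasgn n γ d a' (j + 1))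
        = γ j * (w d a' * sval (Xasgn n γ d a' j))
          - 2 * γ j * (if d = j then w d a' * sval (Xasgn n γ d a' j) else 0) := by
    intro d a'
    rw [sval_Xasgn_step hn γ h1 hprod d a' j]
    by_cases h : j = d
    · rw [if_pos h, if_pos h.symm]; ring
    · rw [if_neg h, if_neg (Ne.symm h)]; ring
  simp_rw [hpt]
  simp_rw [Finset.sum_sub_distrib]
  have e1 : ∑ d : ZMod n, ∑ a' : Bool, γ j * (w d a' * sval (Xasgn n γ d a' j))
      = γ j * ∑ d : ZMod n, ∑ a' : Bool, w d a' * sval (Xasgn n γ d a' j) := by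
    rw [Finset.mul_sum]
    refine Finset.sum_congr rfl fun d _ => ?_
    rw [Finset.mul_sum]
  have e2 : ∑ d : ZMod n, ∑ a' : Bool,
      (2 * γ j * (if d = j then w d a' * sval (Xasgn n γ d a' j) else 0))
      = 2 * γ j * (w j true - w j false) := by
    have h3 : ∀ d : ZMod n, ∑ a' : Bool,
        (2 * γ j * (if d = j then w d a' * sval (Xasgn n γ d a' j) else 0))
        = if d = j then 2 * γ j * ∑ a' : Bool, w d a' * sval (Xasgn n γ d a' j) else 0 := by
      intro d
      split
      · rw [Finset.mul_sum]
      · simp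
    simp_rw [h3]
    rw [Finset.sum_ite_eq' Finset.univ j
      (fun d => 2 * γ j * ∑ a' : Bool, w d a' * sval (Xasgn n γ d a' j)),
      if_pos (Finset.mem_univ j)]
    have h4 : ∑ a' : Bool, w j a' * sval (Xasgn n γ j a' j)
        = w j true - w j false := by
      simp_rw [Xasgn_self]
      rw [Fintype.sum_bool]
      simp [sval]
      ring
    rw [h4]
  rw [e1, e2]
  ring

lemma cycle_rec_zero (hprod : ∀ d, prodS n γ d n = -1) (f : ZMod n → ℝ)
    (hf : ∀ j, f (j + 1) = γ j * f j) (j : ZMod n) : f j = 0 := by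
  have key : ∀ k : ℕ, f (j + (k : ZMod n)) = prodS n γ j k * f j := by
    intro k
    induction k with
    | zero => simp [prodS]
    | succ k ih =>
      have e : j + (((k + 1 : ℕ)) : ZMod n) = (j + (k : ZMod n)) + 1 := by
        push_cast; ring
      rw [e, hf, ih, prodS_succ]; ring
  have h := key n
  rw [ZMod.natCast_self, add_zero, hprod j] at h
  linarith

end Machinery

lemma table_eq (p p' : Bool → Bool → ℝ)
    (hS : ∑ a : Bool, ∑ b : Bool, p a b = ∑ a : Bool, ∑ b : Bool, p' a b)
    (h1 : ∑ a : Bool, ∑ b : Bool, sval a * p a b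
        = ∑ a : Bool, ∑ b : Bool, sval a * p' a b)
    (h2 : ∑ a : Bool, ∑ b : Bool, sval b * p a b
        = ∑ a : Bool, ∑ b : Bool, sval b * p' a b)
    (h3 : ∑ a : Bool, ∑ b : Bool, sval a * sval b * p a b
        = ∑ a : Bool, ∑ b : Bool, sval a * sval b * p' a b)
    (a b : Bool) : p a b = p' a b := by
  norm_num [Fintype.sum_bool, sval] at hS h1 h2 h3
  cases a <;> cases b <;> linarith

lemma sum_table_comb (p q : Bool → Bool → ℝ) (c1 c2 : ℝ) (F : Bool → Bool → ℝ) :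
    ∑ a : Bool, ∑ b : Bool, F a b * (c1 * p a b + c2 * q a b)
      = c1 * (∑ a : Bool, ∑ b : Bool, F a b * p a b)
        + c2 * (∑ a : Bool, ∑ b : Bool, F a b * q a b) := by
  rw [Finset.mul_sum, Finset.mul_sum, ← Finset.sum_add_distrib]
  refine Finset.sum_congr rfl fun a _ => ?_
  rw [Finset.mul_sum, Finset.mul_sum, ← Finset.sum_add_distrib]
  refine Finset.sum_congr rfl fun b _ => ?_
  ring

lemma BPR_sum {n : ℕ} (γ : ZMod n → ℝ) (i : ZMod n) :
    ∑ a : Bool, ∑ b : Bool, BPR n γ i a b = 1 := by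
  norm_num [BPR, Fintype.sum_bool, sval]
  ring

lemma BPR_marg1 {n : ℕ} (γ : ZMod n → ℝ) (i : ZMod n) :
    ∑ a : Bool, ∑ b : Bool, sval a * BPR n γ i a b = 0 := by
  norm_num [BPR, Fintype.sum_bool, sval]
  ring

lemma BPR_marg2 {n : ℕ} (γ : ZMod n → ℝ) (i : ZMod n) :
    ∑ a : Bool, ∑ b : Bool, sval b * BPR n γ i a b = 0 := by
  norm_num [BPR, Fintype.sum_bool, sval]

lemma BPR_corr {n : ℕ} (γ : ZMod n → ℝ) (i : ZMod n) :
    ∑ a : Bool, ∑ b : Bool, sval a * sval b * BPR n γ i a b = γ i := by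
  norm_num [BPR, Fintype.sum_bool, sval]
  ring

lemma table_eq2 (p q r : Bool → Bool → ℝ) (c1 c2 : ℝ)
    (hS : ∑ a : Bool, ∑ b : Bool, r a b
        = c1 * (∑ a : Bool, ∑ b : Bool, p a b) + c2 * (∑ a : Bool, ∑ b : Bool, q a b))
    (h1 : ∑ a : Bool, ∑ b : Bool, sval a * r a b
        = c1 * (∑ a : Bool, ∑ b : Bool, sval a * p a b)
          + c2 * (∑ a : Bool, ∑ b : Bool, sval a * q a b))
    (h2 : ∑ a : Bool, ∑ b : Bool, sval b * r a b
        = c1 * (∑ a : Bool, ∑ b : Bool, sval b * p a b)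
          + c2 * (∑ a : Bool, ∑ b : Bool, sval b * q a b))
    (h3 : ∑ a : Bool, ∑ b : Bool, sval a * sval b * r a b
        = c1 * (∑ a : Bool, ∑ b : Bool, sval a * sval b * p a b)
          + c2 * (∑ a : Bool, ∑ b : Bool, sval a * sval b * q a b))
    (a b : Bool) : r a b = c1 * p a b + c2 * q a b := by
  norm_num [Fintype.sum_bool, sval] at hS h1 h2 h3
  cases a <;> cases b <;> linarith


end CycleDecomp

/-- a contextual non-disturbing `n`-cycle behavior `B`, with `γ` the
(unique) sign vector with `Ω_γ(B) > n - 2`, decomposes as `B = λ·B_PR + (1-λ)·B_f`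
for some `λ ∈ (0,1]` and a noncontextual behavior `B_f` with `Ω_γ(B_f) = n - 2`,
where `B_PR` is the PR-like behavior for `γ`; necessarily
`λ = (Ω_γ(B) - (n-2))/2`. -/
theorem contextual_decomposition (n : ℕ) [NeZero n] (hn : 3 ≤ n)
    (B : ZMod n → Bool → Bool → ℝ)
    (hB : IsNCycleBehavior n B) (hnd : NCycleNonDisturbing n B)
    (hctx : ¬ NCycleNoncontextual n B)
    (γ : ZMod n → ℝ) (hγ : IsSignVector n γ)
    (hviol : (n : ℝ) - 2 < OmegaNC n γ B) :
    ∃ lam : ℝ, lam ∈ Set.Ioc (0 : ℝ) 1 ∧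
      lam = (OmegaNC n γ B - ((n : ℝ) - 2)) / 2 ∧
      ∃ Bf : ZMod n → Bool → Bool → ℝ,
        IsNCycleBehavior n Bf ∧ NCycleNoncontextual n Bf ∧
          OmegaNC n γ Bf = (n : ℝ) - 2 ∧
          ∀ i a b, B i a b = lam * BPR n γ i a b + (1 - lam) * Bf i a b := by
    classical
  clear hctx
  obtain ⟨hγ1, S, hSodd, hSchar⟩ := hγ
  obtain ⟨hBpos, hBsum⟩ := hB
  have hprod : ∀ d, CycleDecomp.prodS n γ d n = -1 :=
    CycleDecomp.prodS_total γ hγ1 S hSodd hSchar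
  -- the defect partner of `a` in context `i`
  set db : ZMod n → Bool → Bool := fun i a => if γ i = 1 then !a else a with hdb
  -- pointwise sign identities
  have pt1 : ∀ (i : ZMod n) (a b : Bool) (x : ℝ), sval a * sval b * x
      = γ i * x - 2 * γ i * (if b = db i a then x else 0) := by
    intro i a b x
    rcases hγ1 i with h | h <;> cases a <;> cases b <;>
      norm_num [sval, hdb, h] <;> ring
  have pt2 : ∀ (i : ZMod n) (a b : Bool) (x : ℝ), sval b * x
      = γ i * (sval a * x) - 2 * γ i * sval a * (if b = db i a then x else 0) := by
    intro i a b x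
    rcases hγ1 i with h | h <;> cases a <;> cases b <;>
      norm_num [sval, hdb, h] <;> ring
  -- violating weights
  set N : ZMod n → ℝ := fun i => ∑ a : Bool, B i a (db i a) with hN
  have hNpos : ∀ i, 0 ≤ N i := fun i =>
    Finset.sum_nonneg fun a _ => hBpos i a (db i a)
  -- correlators of B
  have corrB : ∀ i, ∑ a : Bool, ∑ b : Bool, sval a * sval b * B i a b
      = γ i * (1 - 2 * N i) := by
    intro i
    have e : ∀ a b : Bool, sval a * sval b * B i a b
        = γ i * B i a b - 2 * γ i * (if b = db i a then B i a b else 0) :=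
      fun a b => pt1 i a b _
    simp_rw [e]
    simp_rw [Finset.sum_sub_distrib]
    have e1 : ∑ a : Bool, ∑ b : Bool, γ i * B i a b
        = γ i * ∑ a : Bool, ∑ b : Bool, B i a b := by
      rw [Finset.mul_sum]
      exact Finset.sum_congr rfl fun a _ => (Finset.mul_sum _ _ _).symm
    have e2 : ∑ a : Bool, ∑ b : Bool, (2 * γ i * (if b = db i a then B i a b else 0))
        = 2 * γ i * N i := by
      have e3 : ∀ a : Bool, ∑ b : Bool, (2 * γ i * (if b = db i a then B i a b else 0))
          = 2 * γ i * B i a (db i a) := by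
        intro a
        rw [← Finset.mul_sum, Finset.sum_ite_eq' Finset.univ (db i a) (B i a),
          if_pos (Finset.mem_univ _)]
      simp_rw [e3]
      rw [← Finset.mul_sum]
    rw [e1, e2, hBsum i]
    ring
  -- non-disturbance in expectation form
  have hm2 : ∀ j, (∑ a : Bool, ∑ b : Bool, sval b * B j a b)
      = ∑ a : Bool, ∑ b : Bool, sval a * B (j + 1) a b := by
    intro j
    rw [Finset.sum_comm]
    have e : ∀ b : Bool, ∑ a : Bool, sval b * B j a b
        = sval b * ∑ c : Bool, B (j + 1) b c := by
      intro b
      rw [← Finset.mul_sum, hnd j b]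
    refine (Finset.sum_congr rfl fun b _ => e b).trans ?_
    exact Finset.sum_congr rfl fun b _ => (Finset.mul_sum _ _ _)
  set m : ZMod n → ℝ := fun j => ∑ a : Bool, ∑ b : Bool, sval a * B j a b with hm
  set D : ZMod n → ℝ := fun j => B j true (db j true) - B j false (db j false) with hD
  have mrec : ∀ j, m (j + 1) = γ j * (m j - 2 * D j) := by
    intro j
    have e0 : m (j + 1) = ∑ a : Bool, ∑ b : Bool, sval b * B j a b := (hm2 j).symm
    rw [e0]
    have e : ∀ a b : Bool, sval b * B j a b
        = γ j * (sval a * B j a b)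
          - 2 * γ j * sval a * (if b = db j a then B j a b else 0) :=
      fun a b => pt2 j a b _
    simp_rw [e]
    simp_rw [Finset.sum_sub_distrib]
    have e1 : ∑ a : Bool, ∑ b : Bool, γ j * (sval a * B j a b) = γ j * m j := by
      rw [hm, Finset.mul_sum]
      exact Finset.sum_congr rfl fun a _ => (Finset.mul_sum _ _ _).symm
    have e2 : ∑ a : Bool, ∑ b : Bool,
        (2 * γ j * sval a * (if b = db j a then B j a b else 0)) = 2 * γ j * D j := by
      have e3 : ∀ a : Bool, ∑ b : Bool,
          (2 * γ j * sval a * (if b = db j a then B j a b else 0))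
          = 2 * γ j * sval a * B j a (db j a) := by
        intro a
        rw [← Finset.mul_sum, Finset.sum_ite_eq' Finset.univ (db j a) (B j a),
          if_pos (Finset.mem_univ _)]
      simp_rw [e3]
      rw [Fintype.sum_bool, hD]
      simp [sval]
      ring
    rw [e1, e2]
    ring
  -- total violating weight and the value of Omega
  set T : ℝ := ∑ i : ZMod n, N i with hT
  have hTpos : 0 ≤ T := Finset.sum_nonneg fun i _ => hNpos i
  have hcard : ∑ _i : ZMod n, (1 : ℝ) = (n : ℝ) := by
    rw [Finset.sum_const, Finset.card_univ, ZMod.card, nsmul_eq_mul, mul_one]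
  have hOm : OmegaNC n γ B = (n : ℝ) - 2 * T := by
    unfold OmegaNC
    have e : ∀ i : ZMod n, γ i * ∑ a : Bool, ∑ b : Bool, sval a * sval b * B i a b
        = 1 - 2 * N i := by
      intro i
      rw [corrB i]
      rcases hγ1 i with h | h <;> rw [h] <;> ring
    simp_rw [e]
    rw [Finset.sum_sub_distrib, hcard, ← Finset.mul_sum, ← hT]
  have hT1 : T < 1 := by rw [hOm] at hviol; linarith
  refine ⟨1 - T, ⟨by linarith, by linarith⟩, by rw [hOm]; ring, ?_⟩
  -- generic facts about `BfW` behaviors with total weight 1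
  have hBfFacts : ∀ w : ZMod n → Bool → ℝ, (∀ d a, 0 ≤ w d a) →
      (∑ d : ZMod n, ∑ a : Bool, w d a) = 1 →
      IsNCycleBehavior n (CycleDecomp.BfW n γ w) ∧
      NCycleNoncontextual n (CycleDecomp.BfW n γ w) ∧
      OmegaNC n γ (CycleDecomp.BfW n γ w) = (n : ℝ) - 2 := by
    intro w hw0 hw1
    refine ⟨⟨fun i a b => CycleDecomp.BfW_nonneg γ w hw0 i a b,
      fun i => by rw [CycleDecomp.BfW_sum γ w i, hw1]⟩,
      ⟨CycleDecomp.qw n γ w, fun x => CycleDecomp.qw_nonneg γ w hw0 x,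
        by rw [CycleDecomp.qw_total γ w, hw1], fun i a b => rfl⟩, ?_⟩
    unfold OmegaNC
    have e : ∀ i : ZMod n,
        γ i * ∑ a : Bool, ∑ b : Bool, sval a * sval b * CycleDecomp.BfW n γ w i a b
        = 1 - 2 * ∑ a' : Bool, w i a' := by
      intro i
      rw [CycleDecomp.BfW_corr γ hn hγ1 hprod w i, hw1]
      rcases hγ1 i with h | h <;> rw [h] <;> ring
    simp_rw [e]
    rw [Finset.sum_sub_distrib, hcard, ← Finset.mul_sum, hw1, mul_one]
  by_cases hT0 : T = 0
  · -- `B` is exactly the PR behavior; use the uniform one-defect distribution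
    have hT0' : ∑ i : ZMod n, N i = 0 := by rw [← hT]; exact hT0
    have hzN : ∀ i, N i = 0 := fun i =>
      (Finset.sum_eq_zero_iff_of_nonneg (fun i _ => hNpos i)).mp hT0' i (Finset.mem_univ i)
    have hzB : ∀ i a, B i a (db i a) = 0 := by
      intro i a
      have hzN' : ∑ a : Bool, B i a (db i a) = 0 := by rw [← hzN i, hN]
      exact (Finset.sum_eq_zero_iff_of_nonneg
        (fun a _ => hBpos i a (db i a))).mp hzN' a (Finset.mem_univ a)
    have hDz : ∀ j, D j = 0 := by
      intro j
      rw [hD]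
      dsimp only
      rw [hzB j true, hzB j false]
      ring
    have hmz : ∀ j, m j = 0 := by
      refine CycleDecomp.cycle_rec_zero γ hprod m fun j => ?_
      rw [mrec j, hDz j]
      ring
    have hnR : (0 : ℝ) < (n : ℝ) := by
      have : 0 < n := Nat.pos_of_ne_zero (NeZero.ne n)
      exact_mod_cast this
    set w : ZMod n → Bool → ℝ := fun _ _ => 1 / (2 * (n : ℝ)) with hw
    have hw0 : ∀ d a, 0 ≤ w d a := fun d a => by rw [hw]; positivity
    have hw1 : (∑ d : ZMod n, ∑ a : Bool, w d a) = 1 := by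
      simp only [hw, Fintype.sum_bool]
      rw [Finset.sum_const, Finset.card_univ, ZMod.card, nsmul_eq_mul]
      field_simp
      ring
    obtain ⟨hBf1, hBf2, hBf3⟩ := hBfFacts w hw0 hw1
    refine ⟨CycleDecomp.BfW n γ w, hBf1, hBf2, hBf3, ?_⟩
    intro i a b
    refine CycleDecomp.table_eq2 (BPR n γ i) (CycleDecomp.BfW n γ w i) (B i)
      (1 - T) (1 - (1 - T)) ?_ ?_ ?_ ?_ a b
    · rw [hBsum i, CycleDecomp.BPR_sum γ i, hBf1.2 i, hT0]
      ring
    · have hL : (∑ a : Bool, ∑ b : Bool, sval a * B i a b) = (0 : ℝ) := hmz i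
      rw [hL, CycleDecomp.BPR_marg1 γ i, hT0]
      ring
    · have hL : (∑ a : Bool, ∑ b : Bool, sval b * B i a b) = (0 : ℝ) := by
        rw [hm2 i]
        exact hmz (i + 1)
      rw [hL, CycleDecomp.BPR_marg2 γ i, hT0]
      ring
    · rw [corrB i, CycleDecomp.BPR_corr γ i, hzN i, hT0]
      ring
  · -- the main case: positive violating weight
    have hTlt : 0 < T := lt_of_le_of_ne hTpos (Ne.symm hT0)
    set w : ZMod n → Bool → ℝ := fun d a => B d a (db d a) / T with hw
    have hw0 : ∀ d a, 0 ≤ w d a := fun d a => by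
      rw [hw]
      exact div_nonneg (hBpos d a (db d a)) hTpos
    have hwa : ∀ d, ∑ a' : Bool, w d a' = N d / T := by
      intro d
      simp only [hw, hN]
      rw [← Finset.sum_div]
    have hw1 : (∑ d : ZMod n, ∑ a : Bool, w d a) = 1 := by
      calc ∑ d : ZMod n, ∑ a : Bool, w d a = ∑ d : ZMod n, N d / T :=
            Finset.sum_congr rfl fun d _ => hwa d
        _ = (∑ d : ZMod n, N d) / T := by rw [← Finset.sum_div]
        _ = T / T := by rw [← hT]
        _ = 1 := div_self hT0
    have hTD : ∀ j, T * (w j true - w j false) = D j := by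
      intro j
      simp only [hw, hD]
      field_simp
    have hrec : ∀ j, (m (j + 1) - T * ∑ d : ZMod n, ∑ a' : Bool,
        w d a' * sval (CycleDecomp.Xasgn n γ d a' (j + 1)))
        = γ j * (m j - T * ∑ d : ZMod n, ∑ a' : Bool,
            w d a' * sval (CycleDecomp.Xasgn n γ d a' j)) := by
      intro j
      rw [mrec j, CycleDecomp.BfW_Mrec γ hn hγ1 hprod w j]
      linear_combination (2 * γ j) * hTD j
    have hzero : ∀ j, m j - T * (∑ d : ZMod n, ∑ a' : Bool,
        w d a' * sval (CycleDecomp.Xasgn n γ d a' j)) = 0 :=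
      CycleDecomp.cycle_rec_zero γ hprod
        (fun j => m j - T * ∑ d : ZMod n, ∑ a' : Bool,
          w d a' * sval (CycleDecomp.Xasgn n γ d a' j)) hrec
    have hmM : ∀ j, m j = T * ∑ d : ZMod n, ∑ a' : Bool,
        w d a' * sval (CycleDecomp.Xasgn n γ d a' j) := by
      intro j
      have h := hzero j
      linarith
    obtain ⟨hBf1, hBf2, hBf3⟩ := hBfFacts w hw0 hw1
    refine ⟨CycleDecomp.BfW n γ w, hBf1, hBf2, hBf3, ?_⟩
    intro i a b
    refine CycleDecomp.table_eq2 (BPR n γ i) (CycleDecomp.BfW n γ w i) (B i)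
      (1 - T) (1 - (1 - T)) ?_ ?_ ?_ ?_ a b
    · rw [hBsum i, CycleDecomp.BPR_sum γ i, hBf1.2 i]
      ring
    · have hL : (∑ a : Bool, ∑ b : Bool, sval a * B i a b)
          = T * ∑ d : ZMod n, ∑ a' : Bool,
              w d a' * sval (CycleDecomp.Xasgn n γ d a' i) := hmM i
      rw [hL, CycleDecomp.BPR_marg1 γ i, CycleDecomp.BfW_marg1 γ w i]
      ring
    · have hL : (∑ a : Bool, ∑ b : Bool, sval b * B i a b)
          = T * ∑ d : ZMod n, ∑ a' : Bool,
              w d a' * sval (CycleDecomp.Xasgn n γ d a' (i + 1)) := by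
        rw [hm2 i]
        exact hmM (i + 1)
      rw [hL, CycleDecomp.BPR_marg2 γ i, CycleDecomp.BfW_marg2 γ w i]
      ring
    · rw [corrB i, CycleDecomp.BPR_corr γ i,
        CycleDecomp.BfW_corr γ hn hγ1 hprod w i, hw1, hwa i]
      have hTT : T * (N i / T) = N i := by field_simp
      linear_combination (2 * γ i) * hTT
end

section
/- Define, for a non-disturbing n-cycle behavior B, the cost monotone M_NPR(B) = inf { n + 2(α − 1) : α ∈ [0,1], F(α) → B }, with M_NPR(B) = +∞ if no such α exists. Then for every α ∈ [0,1], M_NPR(F(α)) = n + 2(α − 1) = Ω_γ(F(α)). -/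
open Finset

/-! `F(β)` is the PR-like behavior of visibility `c = (n - 2 + 2β) / n`, whose value is
`Ω_γ(F(β)) = n c`, so it suffices that no noncontextual wiring `W` raises `Ω_γ` above `n c`.
Fix the shared randomness `λ`. For a given pre-processing outcome, a post-processing map has
expected output `s ↦ e + o s` with `|e| + |o| ≤ 1`, and a wired edge then has correlator
`e e' + c γ_g o o'`. Averaging over the pre-processing gives, at each site `j`, a point
`(ē_j, ō_j) = (E e, E |o|)` of the triangle `|a| + d ≤ 1, 0 ≤ d`, and the branch contributes
at most `Σ_j γ_j ē_j ē_{j+1} + c ō_j ō_{j+1}`. This is affine in each site, so only the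
vertices `(±1, 0)`, `(0, 1)` of the triangle matter. There the sum is `n c` if every site is
`(0, 1)` and at most `n - 2 ≤ n c` otherwise, because the odd number of signs `γ_j = -1`
frustrates one edge, and a mixed configuration has two edges contributing `0`.
So `F(β) → F(α)` forces `α ≤ β`, and the identity wiring gives `β = α`. -/

open Function

def unitTriangle : Set (ℝ × ℝ) := {v | |v.1| + v.2 ≤ 1 ∧ 0 ≤ v.2}

def triangleVertices : Set (ℝ × ℝ) := {(1, 0), (-1, 0), (0, 1)}

lemma mem_triangleVertices {v : ℝ × ℝ} :
    v ∈ triangleVertices ↔ v = (1, 0) ∨ v = (-1, 0) ∨ v = (0, 1) := Iff.rfl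

lemma triangleVertices_subset_unitTriangle : triangleVertices ⊆ unitTriangle := by
  rintro v (rfl | rfl | rfl) <;> norm_num [unitTriangle]

lemma affine_le_of_forall_mem_triangleVertices {A B C M : ℝ}
    (hV : ∀ w ∈ triangleVertices, A + B * w.1 + C * w.2 ≤ M) {v : ℝ × ℝ}
    (hv : v ∈ unitTriangle) : A + B * v.1 + C * v.2 ≤ M := by
  obtain ⟨hv1, hv2⟩ := hv
  have h₁ := hV (1, 0) (by simp [triangleVertices])
  have h₂ := hV (-1, 0) (by simp [triangleVertices])
  have h₃ := hV (0, 1) (by simp [triangleVertices])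
  simp only [mul_one, mul_zero, add_zero, mul_neg] at h₁ h₂ h₃
  -- `v` is the convex combination of the vertices with weights `(1 - v.2 ± v.1) / 2` and `v.2`
  have hw₁ : 0 ≤ 1 - v.2 + v.1 := by linarith [neg_abs_le v.1]
  have hw₂ : 0 ≤ 1 - v.2 - v.1 := by linarith [le_abs_self v.1]
  nlinarith [mul_nonneg hw₁ (sub_nonneg.2 h₁), mul_nonneg hw₂ (sub_nonneg.2 h₂),
    mul_nonneg hv2 (sub_nonneg.2 h₃)]

theorem le_of_forall_mem_triangleVertices {ι : Type*} [Fintype ι] [DecidableEq ι]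
    {f : (ι → ℝ × ℝ) → ℝ} {M : ℝ}
    (hf : ∀ x j, ∃ A B C : ℝ, ∀ v, f (update x j v) = A + B * v.1 + C * v.2)
    (hM : ∀ x, (∀ i, x i ∈ triangleVertices) → f x ≤ M)
    {x : ι → ℝ × ℝ} (hx : ∀ i, x i ∈ unitTriangle) : f x ≤ M := by
  suffices H : ∀ F : Finset ι, ∀ x : ι → ℝ × ℝ, (∀ i, x i ∈ unitTriangle) →
      (∀ i ∉ F, x i ∈ triangleVertices) → f x ≤ M from
    H univ x hx fun i hi => absurd (mem_univ i) hi
  intro F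
  induction F using Finset.induction with
  | empty => exact fun x _ hV => hM x fun i => hV i (notMem_empty i)
  | insert j F _ ih =>
    intro x hx hV
    obtain ⟨A, B, C, hABC⟩ := hf x j
    have hvert : ∀ w ∈ triangleVertices, A + B * w.1 + C * w.2 ≤ M := by
      intro w hw
      rw [← hABC]
      refine ih _ (fun i => ?_) (fun i hi => ?_) <;> rcases eq_or_ne i j with rfl | hij
      · simpa using triangleVertices_subset_unitTriangle hw
      · simpa [hij] using hx i
      · simpa using hw
      · simpa [hij] using hV i (by simp [hij, hi])
    simpa [← hABC] using affine_le_of_forall_mem_triangleVertices hvert (hx j)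

lemma sum_mem_unitTriangle {κ : Type*} {R : Finset κ} {w : κ → ℝ} (hw : ∀ r, 0 ≤ w r)
    (hw1 : ∑ r ∈ R, w r = 1) {a d : κ → ℝ} (had : ∀ r, |a r| + |d r| ≤ 1) :
    (∑ r ∈ R, w r * a r, ∑ r ∈ R, w r * |d r|) ∈ unitTriangle := by
  refine ⟨?_, sum_nonneg fun r _ => mul_nonneg (hw r) (abs_nonneg _)⟩
  calc |∑ r ∈ R, w r * a r| + ∑ r ∈ R, w r * |d r|
      ≤ ∑ r ∈ R, w r * |a r| + ∑ r ∈ R, w r * |d r| := by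
        gcongr
        refine (abs_sum_le_sum_abs _ _).trans_eq (sum_congr rfl fun r _ => ?_)
        rw [abs_mul, abs_of_nonneg (hw r)]
    _ = ∑ r ∈ R, w r * (|a r| + |d r|) := by rw [← sum_add_distrib]; simp only [mul_add]
    _ ≤ ∑ r ∈ R, w r * 1 := sum_le_sum fun r _ => mul_le_mul_of_nonneg_left (had r) (hw r)
    _ = 1 := by simp [hw1]

lemma IsSignVector.mul_self {n : ℕ} {γ : ZMod n → ℝ} (hγ : IsSignVector n γ) (i : ZMod n) :
    γ i * γ i = 1 := by
  rcases hγ.1 i with h | h <;> rw [h] <;> norm_num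

section Cycle

variable {n : ℕ} [NeZero n]

theorem ZMod.exists_and_not_add_one {P : ZMod n → Prop} (h : ∃ i, P i) (h' : ∃ i, ¬P i) :
    ∃ i, P i ∧ ¬P (i + 1) := by
  obtain ⟨i₀, hi₀⟩ := h
  obtain ⟨j, hj⟩ := h'
  by_contra! hstep
  have hall : ∀ m : ℕ, P (i₀ + m) := by
    intro m
    induction m with
    | zero => simpa using hi₀
    | succ m ih => simpa [add_assoc] using hstep _ ih
  exact hj (by simpa using hall (j - i₀).val)

variable (γ : ZMod n → ℝ) (c : ℝ)

def cycleEnergy (x : ZMod n → ℝ × ℝ) : ℝ :=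
  ∑ i, (γ i * ((x i).1 * (x (i + 1)).1) + c * ((x i).2 * (x (i + 1)).2))

lemma cycleEnergy_update_affine [Nontrivial (ZMod n)] (x : ZMod n → ℝ × ℝ) (j : ZMod n) :
    ∃ A B C : ℝ, ∀ v, cycleEnergy γ c (update x j v) = A + B * v.1 + C * v.2 := by
  have hj : j + 1 ≠ j := by simp
  have hterm : ∀ i, ∃ A B C : ℝ, ∀ v : ℝ × ℝ,
      γ i * ((update x j v i).1 * (update x j v (i + 1)).1)
        + c * ((update x j v i).2 * (update x j v (i + 1)).2) = A + B * v.1 + C * v.2 := by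
    intro i
    by_cases hi : i = j
    · subst hi
      exact ⟨0, γ i * (x (i + 1)).1, c * (x (i + 1)).2, fun v => by simp [hj]; ring⟩
    by_cases hi' : i + 1 = j
    · subst hi'
      exact ⟨0, γ i * (x i).1, c * (x i).2, fun v => by simp [hi]; ring⟩
    exact ⟨γ i * ((x i).1 * (x (i + 1)).1) + c * ((x i).2 * (x (i + 1)).2), 0, 0,
      fun v => by simp [hi, hi']⟩
  choose A B C hABC using hterm
  exact ⟨∑ i, A i, ∑ i, B i, ∑ i, C i, fun v => by
    simp only [cycleEnergy, hABC, sum_add_distrib, sum_mul]⟩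

lemma IsSignVector.prod_eq_neg_one {γ : ZMod n → ℝ} (hγ : IsSignVector n γ) : ∏ i, γ i = -1 := by
  obtain ⟨hpm, S, hodd, hS⟩ := hγ
  rw [← prod_mul_prod_compl S γ, prod_congr rfl fun i hi => (hS i).2 hi,
    prod_eq_one fun i hi => (hpm i).resolve_right fun h => by simp [(hS i).1 h] at hi,
    prod_const, hodd.neg_one_pow, mul_one]

lemma sum_le_card_sub_two {ι : Type*} [Fintype ι] {e : ι → ℝ} (he : ∀ i, e i ≤ 1)
    (S : Finset ι) (hS : 2 ≤ ∑ i ∈ S, (1 - e i)) : ∑ i, e i ≤ Fintype.card ι - 2 := by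
  have : ∑ i ∈ S, (1 - e i) ≤ ∑ i, (1 - e i) :=
    sum_le_sum_of_subset_of_nonneg (subset_univ S) fun i _ _ => sub_nonneg.2 (he i)
  simp only [sum_sub_distrib, sum_const, card_univ, nsmul_eq_mul, mul_one] at this hS
  linarith

variable {γ c}

lemma cycleEnergy_le_of_forall_mem_triangleVertices (hγ : IsSignVector n γ)
    (hc : (n : ℝ) - 2 ≤ n * c) (hc1 : c ≤ 1) {x : ZMod n → ℝ × ℝ}
    (hx : ∀ i, x i ∈ triangleVertices) : cycleEnergy γ c x ≤ n * c := by
  set e : ZMod n → ℝ := fun i =>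
    γ i * ((x i).1 * (x (i + 1)).1) + c * ((x i).2 * (x (i + 1)).2)
  have he1 : ∀ i, e i ≤ 1 := by
    intro i
    rcases mem_triangleVertices.1 (hx i) with h | h | h <;>
      rcases mem_triangleVertices.1 (hx (i + 1)) with h' | h' | h' <;>
      rcases hγ.1 i with hg | hg <;> simp [e, h, h', hg, hc1]
  suffices (∀ i, x i = (0, 1)) ∨ ∃ S : Finset (ZMod n), 2 ≤ ∑ i ∈ S, (1 - e i) by
    rcases this with hD | ⟨S, hS⟩
    · simp [cycleEnergy, hD]
    · have := sum_le_card_sub_two he1 S hS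
      rw [ZMod.card] at this
      exact this.trans hc
  by_cases hD : ∃ i, x i = (0, 1)
  · by_cases hA : ∃ i, x i ≠ (0, 1)
    · -- a site of each kind: the two edges where the kind changes contribute `0`
      obtain ⟨k, hk, hk'⟩ := ZMod.exists_and_not_add_one hD (by simpa using hA)
      obtain ⟨l, hl, hl'⟩ := ZMod.exists_and_not_add_one (P := fun i => x i ≠ (0, 1)) hA
        (by simpa using hD)
      have hkl : k ≠ l := by rintro rfl; exact hl hk
      refine Or.inr ⟨{k, l}, le_of_eq ?_⟩
      have hek : e k = 0 := by
        rcases mem_triangleVertices.1 (hx (k + 1)) with h | h | h <;> simp_all [e]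
      have hel : e l = 0 := by
        push Not at hl'
        rcases mem_triangleVertices.1 (hx l) with h | h | h <;> simp_all [e]
      rw [sum_pair hkl, hek, hel]
      norm_num
    · push Not at hA
      exact Or.inl hA
  · -- every site is `(±1, 0)`, and the product of the edge terms is `∏ γ = -1`
    push Not at hD
    have ha : ∀ i, (x i).1 * (x i).1 = 1 ∧ (x i).2 = 0 := by
      intro i
      rcases mem_triangleVertices.1 (hx i) with h | h | h <;> simp_all
    have he : ∀ i, e i = γ i * ((x i).1 * (x (i + 1)).1) := by simp [e, ha]
    have hprod : ∏ i, e i = -1 := by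
      simp only [he, prod_mul_distrib, hγ.prod_eq_neg_one]
      rw [Fintype.prod_equiv (Equiv.addRight 1) (fun i => (x (i + 1)).1) (fun i => (x i).1)
        fun _ => rfl, ← prod_mul_distrib, prod_eq_one fun i _ => (ha i).1, mul_one]
    obtain ⟨k, -, hk⟩ : ∃ k ∈ univ, e k < 0 := by
      by_contra! h
      linarith [prod_nonneg h]
    have hek : e k * e k = 1 := by
      calc e k * e k = γ k * γ k * ((x k).1 * (x k).1) * ((x (k + 1)).1 * (x (k + 1)).1) := by
            rw [he]; ring
        _ = 1 := by rw [hγ.mul_self, (ha k).1, (ha (k + 1)).1, one_mul, one_mul]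
    refine Or.inr ⟨{k}, ?_⟩
    rw [sum_singleton]
    nlinarith

theorem cycleEnergy_le [Nontrivial (ZMod n)] (hγ : IsSignVector n γ) (hc : (n : ℝ) - 2 ≤ n * c)
    (hc1 : c ≤ 1) {x : ZMod n → ℝ × ℝ} (hx : ∀ i, x i ∈ unitTriangle) :
    cycleEnergy γ c x ≤ n * c :=
  le_of_forall_mem_triangleVertices (cycleEnergy_update_affine γ c)
    (fun _ => cycleEnergy_le_of_forall_mem_triangleVertices hγ hc hc1) hx

end Cycle

@[simp] lemma sval_true : sval true = 1 := rfl

@[simp] lemma sval_false : sval false = -1 := rfl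

noncomputable def evenPart (μ : Bool → ℝ) : ℝ := (μ true + μ false) / 2

noncomputable def oddPart (μ : Bool → ℝ) : ℝ := (μ true - μ false) / 2

lemma abs_evenPart_add_abs_oddPart_le {μ : Bool → ℝ} (h : ∀ s, |μ s| ≤ 1) :
    |evenPart μ| + |oddPart μ| ≤ 1 := by
  have h₁ := abs_le.1 (h true)
  have h₂ := abs_le.1 (h false)
  unfold evenPart oddPart
  rcases abs_cases ((μ true + μ false) / 2) with ⟨e₁, _⟩ | ⟨e₁, _⟩ <;>
    rcases abs_cases ((μ true - μ false) / 2) with ⟨e₂, _⟩ | ⟨e₂, _⟩ <;> linarith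

section Behavior

variable {n : ℕ}

/-- The PR-like behavior with visibility `c`: `c • B_PR + (1 - c) • B_∅`. -/
noncomputable def prWithVisibility (γ : ZMod n → ℝ) (c : ℝ) : ZMod n → Bool → Bool → ℝ :=
  fun i a b => (1 + c * γ i * (sval a * sval b)) / 4

lemma Fmix_eq_prWithVisibility [NeZero n] (γ : ZMod n → ℝ) (β : ℝ) :
    Fmix n γ β = prWithVisibility γ ((n - 2 + 2 * β) / n) := by
  have : (n : ℝ) ≠ 0 := NeZero.ne _
  funext i a b
  simp only [Fmix, BNPR, BPR, prWithVisibility]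
  field_simp
  ring

def correlator (p : ZMod n → Bool → Bool → ℝ) (i : ZMod n) : ℝ :=
  ∑ a, ∑ b, sval a * sval b * p i a b

lemma correlator_prWithVisibility (γ : ZMod n → ℝ) (c : ℝ) (i : ZMod n) :
    correlator (prWithVisibility γ c) i = c * γ i := by
  simp only [correlator, prWithVisibility, Fintype.sum_bool, sval_true, sval_false]
  ring

lemma omegaNC_prWithVisibility [NeZero n] {γ : ZMod n → ℝ} (hγ : IsSignVector n γ) (c : ℝ) :
    OmegaNC n γ (prWithVisibility γ c) = n * c := by
  change ∑ i, γ i * correlator _ i = _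
  simp only [correlator_prWithVisibility, mul_left_comm _ c, hγ.mul_self, mul_one, sum_const,
    card_univ, ZMod.card, nsmul_eq_mul]

lemma sum_prWithVisibility_mul_mul (γ : ZMod n → ℝ) (c : ℝ) (k : ZMod n) (μ μ' : Bool → ℝ) :
    ∑ s, ∑ s', prWithVisibility γ c k s s' * μ s * μ' s' =
      evenPart μ * evenPart μ' + c * γ k * (oddPart μ * oddPart μ') := by
  simp only [prWithVisibility, evenPart, oddPart, Fintype.sum_bool, sval_true, sval_false]
  ring

end Behavior

lemma mul_sum_sum_le_mul_add_abs {κ : Type*} (R : Finset κ) {g c : ℝ} (hg : |g| ≤ 1) (hc : 0 ≤ c)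
    {q q' : κ → ℝ} (hq : ∀ r, 0 ≤ q r) (hq' : ∀ r, 0 ≤ q' r) (A A' D D' : κ → ℝ)
    {σ : κ → κ → ℝ} (hσ : ∀ r r', |σ r r'| ≤ 1) :
    g * ∑ r ∈ R, ∑ r' ∈ R, q r * q' r' * (A r * A' r' + c * σ r r' * (D r * D' r')) ≤
      g * ((∑ r ∈ R, q r * A r) * ∑ r' ∈ R, q' r' * A' r') +
        c * ((∑ r ∈ R, q r * |D r|) * ∑ r' ∈ R, q' r' * |D' r'|) := by
  set X := ∑ r ∈ R, ∑ r' ∈ R, q r * q' r' * (c * σ r r' * (D r * D' r'))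
  have hsplit : ∑ r ∈ R, ∑ r' ∈ R, q r * q' r' * (A r * A' r' + c * σ r r' * (D r * D' r')) =
      (∑ r ∈ R, q r * A r) * (∑ r' ∈ R, q' r' * A' r') + X := by
    simp only [X, sum_mul_sum, ← sum_add_distrib]
    refine sum_congr rfl fun r _ => sum_congr rfl fun r' _ => by ring
  have hX : |X| ≤ c * ((∑ r ∈ R, q r * |D r|) * ∑ r' ∈ R, q' r' * |D' r'|) := by
    rw [sum_mul_sum, mul_sum]
    refine (abs_sum_le_sum_abs _ _).trans (sum_le_sum fun r _ => ?_)
    rw [mul_sum]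
    refine (abs_sum_le_sum_abs _ _).trans (sum_le_sum fun r' _ => ?_)
    rw [abs_mul, abs_mul, abs_mul, abs_mul, abs_mul, abs_of_nonneg (hq r),
      abs_of_nonneg (hq' r'), abs_of_nonneg hc]
    have := mul_le_mul_of_nonneg_left (hσ r r')
      (mul_nonneg (mul_nonneg (mul_nonneg (hq r) (hq' r')) hc)
        (mul_nonneg (abs_nonneg (D r)) (abs_nonneg (D' r'))))
    linarith
  rw [hsplit, mul_add]
  have : g * X ≤ |X| := by
    calc g * X ≤ |g * X| := le_abs_self _
      _ ≤ |X| := by rw [abs_mul]; exact mul_le_of_le_one_left (abs_nonneg _) hg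
  linarith

namespace NCWiring

variable {n : ℕ}

def identity (n : ℕ) : NCWiring n where
  Λ := {0}
  ρ _ := 1
  ρ_nonneg _ _ := zero_le_one
  ρ_sum := by simp
  R := {0}
  q _ _ _ := 1
  q_nonneg _ _ _ := zero_le_one
  q_sum _ _ _ := by simp
  g i _ _ := i
  m _ _ s _ t := if t = s then 1 else 0
  m_nonneg _ _ _ _ _ := by split <;> norm_num
  m_sum _ _ s _ := by cases s <;> simp

lemma identity_apply (p : ZMod n → Bool → Bool → ℝ) : (identity n).apply p = p := by
  funext i t t'
  cases t <;> cases t' <;> simp [NCWiring.apply, identity]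

noncomputable def response (W : NCWiring n) (j : ZMod n) (r : ℕ) (s : Bool) (l : ℕ) : ℝ :=
  ∑ t, sval t * W.m j r s l t

lemma abs_response_le (W : NCWiring n) (j : ZMod n) (r : ℕ) (s : Bool) (l : ℕ) :
    |W.response j r s l| ≤ 1 := by
  have h₀ := W.m_nonneg j r s l true
  have h₁ := W.m_nonneg j r s l false
  have h := W.m_sum j r s l
  simp only [Fintype.sum_bool] at h
  simp only [response, Fintype.sum_bool, sval_true, sval_false]
  rw [abs_le]
  constructor <;> linarith

lemma correlator_apply (W : NCWiring n) (p : ZMod n → Bool → Bool → ℝ) (i : ZMod n) :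
    correlator (W.apply p) i = ∑ l ∈ W.Λ, W.ρ l * ∑ r ∈ W.R, ∑ r' ∈ W.R,
      W.q i l r * W.q (i + 1) l r' * ∑ s, ∑ s',
        p (W.g i r r') s s' * W.response i r s l * W.response (i + 1) r' s' l := by
  simp only [correlator, NCWiring.apply, response, Fintype.sum_bool, sval_true, sval_false,
    mul_sum, ← sum_add_distrib]
  refine sum_congr rfl fun l _ => sum_congr rfl fun r _ => sum_congr rfl fun r' _ => by ring

noncomputable def localConfig (W : NCWiring n) (l : ℕ) (j : ZMod n) : ℝ × ℝ :=
  (∑ r ∈ W.R, W.q j l r * evenPart (W.response j r · l),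
    ∑ r ∈ W.R, W.q j l r * |oddPart (W.response j r · l)|)

lemma localConfig_mem_unitTriangle (W : NCWiring n) {l : ℕ} (hl : l ∈ W.Λ) (j : ZMod n) :
    W.localConfig l j ∈ unitTriangle :=
  sum_mem_unitTriangle (W.q_nonneg j l) (W.q_sum j l hl) fun r =>
    abs_evenPart_add_abs_oddPart_le fun s => W.abs_response_le j r s l

theorem omegaNC_apply_prWithVisibility_le [NeZero n] [Nontrivial (ZMod n)] {γ : ZMod n → ℝ}
    (hγ : IsSignVector n γ) {c : ℝ} (hc0 : 0 ≤ c) (hc : (n : ℝ) - 2 ≤ n * c) (hc1 : c ≤ 1)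
    (W : NCWiring n) : OmegaNC n γ (W.apply (prWithVisibility γ c)) ≤ n * c := by
  have habs : ∀ i, |γ i| ≤ 1 := fun i => by rcases hγ.1 i with h | h <;> simp [h]
  change ∑ i, γ i * correlator _ i ≤ _
  simp only [W.correlator_apply, sum_prWithVisibility_mul_mul, mul_sum]
  rw [sum_comm]
  simp only [← mul_sum, mul_left_comm (γ _) (W.ρ _)]
  refine (sum_le_sum fun l hl => mul_le_mul_of_nonneg_left ?_ (W.ρ_nonneg l hl)).trans_eq
    (by rw [← sum_mul, W.ρ_sum, one_mul])
  calc _ ≤ cycleEnergy γ c (W.localConfig l) :=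
        sum_le_sum fun i _ => mul_sum_sum_le_mul_add_abs _ (habs i) hc0 (W.q_nonneg i l)
          (W.q_nonneg (i + 1) l) _ _ _ _ fun _ _ => habs _
    _ ≤ n * c := cycleEnergy_le hγ hc hc1 (W.localConfig_mem_unitTriangle hl)

end NCWiring

/-- the cost monotone
`M_NPR(B) = inf { n + 2(α-1) : α ∈ [0,1], F(α) → B }` (an infimum in the extended
reals, so that `M_NPR(B) = +∞` when no such `α` exists) satisfies, for every
`α ∈ [0,1]`, `M_NPR(F(α)) = n + 2(α-1) = Ω_γ(F(α))`. -/
theorem cost_monotone_on_Fmix (n : ℕ) [NeZero n] (hn : 3 ≤ n)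
    (γ : ZMod n → ℝ) (hγ : IsSignVector n γ)
    (α : ℝ) (hα : α ∈ Set.Icc (0 : ℝ) 1) :
    sInf {x : EReal | ∃ β ∈ Set.Icc (0 : ℝ) 1,
        NCConvertsTo n (Fmix n γ β) (Fmix n γ α) ∧
          x = (((n : ℝ) + 2 * (β - 1) : ℝ) : EReal)} =
      (((n : ℝ) + 2 * (α - 1) : ℝ) : EReal) ∧
    (n : ℝ) + 2 * (α - 1) = OmegaNC n γ (Fmix n γ α) := by
  have : Nontrivial (ZMod n) := ZMod.nontrivial_iff.2 (by omega)
  have hn0 : (0 : ℝ) < n := by positivity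
  have hnc : ∀ β : ℝ, (n : ℝ) * ((n - 2 + 2 * β) / n) = n + 2 * (β - 1) := fun β => by
    field_simp; ring
  have hΩ : ∀ β, OmegaNC n γ (Fmix n γ β) = n + 2 * (β - 1) := fun β => by
    rw [Fmix_eq_prWithVisibility, omegaNC_prWithVisibility hγ, hnc]
  refine ⟨le_antisymm (sInf_le ⟨α, hα, ⟨NCWiring.identity n, NCWiring.identity_apply _⟩, rfl⟩)
    (le_sInf ?_), (hΩ α).symm⟩
  rintro _ ⟨β, ⟨hβ0, hβ1⟩, ⟨W, hW⟩, rfl⟩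
  have hle := W.omegaNC_apply_prWithVisibility_le hγ (c := (n - 2 + 2 * β) / n)
    (div_nonneg (by linarith [show (3 : ℝ) ≤ n by exact_mod_cast hn]) hn0.le)
    (by rw [hnc]; linarith) ((div_le_one hn0).2 (by linarith))
  rw [← Fmix_eq_prWithVisibility, hW, hΩ, hnc] at hle
  exact_mod_cast hle
end
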